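/- For any commutative ring R, the symplectic Lie algebra sp(2g,R) with the conjugation action of Sp(2g,R) is isomorphic as an Sp(2g,R)-module to the divided square D²(U_R) of the natural module U_R = R^{2g}, i.e., the submodule of symmetric tensors in U_R ⊗ U_R, where X ∈ Sp(2g,R) acts on Y ∈ sp(2g,R) by Y ↦ XYX⁻¹ and u⊗u is identified with the endomorphism x ↦ ⟨u,x⟩u for the symplectic form ⟨·,·⟩. -/

import Mathlib

/-!
The identification `u ⊗ v ↦ u vᵀ` of `U ⊗ U` with square matrices turns the swap of the
factors into transposition and `X ⊗ X` into `M ↦ X M Xᵀ`. Right multiplication by the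
invertible skew matrix `J` then sends `M` to `M J`, which is `J`-skew-adjoint exactly when `M`
is symmetric, and for symplectic `X` with inverse `X'` one has `Xᵀ J = J X'`, so
`X M Xᵀ J = X (M J) X'`.
-/

open Matrix TensorProduct

/-- The standard symplectic form matrix `J = [[0, I], [-I, 0]]`. -/
def Jmat (g : ℕ) (R : Type*) [CommRing R] :
    Matrix (Fin g ⊕ Fin g) (Fin g ⊕ Fin g) R :=
  Matrix.fromBlocks 0 1 (-1) 0

section

variable {R : Type*} [CommRing R]

variable (R) in
noncomputable def tensorEquivMatrix (n m : Type*) [Fintype n] [DecidableEq n] :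
    (n → R) ⊗[R] (m → R) ≃ₗ[R] Matrix n m R :=
  TensorProduct.comm R _ _ ≪≫ₗ TensorProduct.piScalarRight R R (m → R) n ≪≫ₗ
    Matrix.ofLinearEquiv R

@[simp]
lemma tensorEquivMatrix_tmul {n m : Type*} [Fintype n] [DecidableEq n] (u : n → R) (v : m → R) :
    tensorEquivMatrix R n m (u ⊗ₜ v) = vecMulVec u v := by
  ext i j
  simp [tensorEquivMatrix, vecMulVec_apply]

lemma tensorEquivMatrix_comm {n m : Type*} [Fintype n] [DecidableEq n] [Fintype m]
    [DecidableEq m] (t : (n → R) ⊗[R] (m → R)) :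
    tensorEquivMatrix R m n (TensorProduct.comm R _ _ t) = (tensorEquivMatrix R n m t)ᵀ := by
  induction t with
  | zero => simp
  | tmul u v => simp [transpose_vecMulVec]
  | add x y hx hy => simp only [map_add, hx, hy, transpose_add]

lemma tensorEquivMatrix_map {n m n' m' : Type*} [Fintype n] [DecidableEq n] [Fintype m]
    [Fintype n'] [DecidableEq n'] (A : Matrix n' n R) (B : Matrix m' m R)
    (t : (n → R) ⊗[R] (m → R)) :
    tensorEquivMatrix R n' m' (map A.mulVecLin B.mulVecLin t) =
      A * tensorEquivMatrix R n m t * Bᵀ := by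
  induction t with
  | zero => simp
  | tmul u v =>
    rw [map_tmul, tensorEquivMatrix_tmul, tensorEquivMatrix_tmul, mul_vecMulVec, vecMulVec_mul,
      vecMul_transpose, mulVecLin_apply, mulVecLin_apply]
  | add x y hx hy => simp only [map_add, hx, hy, Matrix.mul_add, Matrix.add_mul]

end

def symmetricTensors (R M : Type*) [CommSemiring R] [AddCommMonoid M] [Module R M] :
    Submodule R (M ⊗[R] M) :=
  LinearMap.eqLocus (TensorProduct.comm R M M).toLinearMap LinearMap.id

section

variable {R : Type*} [CommRing R] {n : Type*} [Fintype n]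

lemma isSkewAdjoint_iff_mul_add_transpose_mul_eq_zero (J Y : Matrix n n R) :
    J.IsSkewAdjoint Y ↔ J * Y + Yᵀ * J = 0 := by
  rw [Matrix.IsSkewAdjoint, IsAdjointPair, mul_neg, eq_neg_iff_add_eq_zero, add_comm]

variable [DecidableEq n]

lemma transpose_mul_eq_mul_of_mul_eq_one {J X X' : Matrix n n R} (hX : Xᵀ * J * X = J)
    (hXX' : X * X' = 1) : Xᵀ * J = J * X' := by
  rw [← Matrix.mul_one (Xᵀ * J), ← hXX', ← Matrix.mul_assoc, hX]

lemma mem_symmetricTensors_iff_isSymm (t : (n → R) ⊗[R] (n → R)) :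
    t ∈ symmetricTensors R (n → R) ↔ (tensorEquivMatrix R n n t).IsSymm := by
  rw [symmetricTensors, LinearMap.mem_eqLocus, IsSymm, ← tensorEquivMatrix_comm,
    (tensorEquivMatrix R n n).injective.eq_iff]
  rfl

lemma mul_mem_skewAdjointMatricesSubmodule_iff (J : (Matrix n n R)ˣ)
    (hJ : (J : Matrix n n R)ᵀ = -J) (M : Matrix n n R) :
    M * J ∈ skewAdjointMatricesSubmodule (J : Matrix n n R) ↔ M.IsSymm := by
  rw [mem_skewAdjointMatricesSubmodule, Matrix.IsSkewAdjoint, IsAdjointPair, transpose_mul, hJ,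
    IsSymm, neg_mul, neg_mul, mul_neg, neg_inj, mul_assoc, Units.mul_right_inj, Units.mul_left_inj]

variable (R n) in
noncomputable def symmetricTensorsEquivSkewAdjoint (J : (Matrix n n R)ˣ)
    (hJ : (J : Matrix n n R)ᵀ = -J) :
    symmetricTensors R (n → R) ≃ₗ[R] skewAdjointMatricesSubmodule (J : Matrix n n R) :=
  (tensorEquivMatrix R n n ≪≫ₗ J.mulRightLinearEquiv R).ofSubmodules _ _ <| by
    ext Y
    rw [Submodule.mem_map_equiv, mem_symmetricTensors_iff_isSymm,
      ← mul_mem_skewAdjointMatricesSubmodule_iff J hJ]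
    simp

@[simp]
lemma coe_symmetricTensorsEquivSkewAdjoint_apply (J : (Matrix n n R)ˣ)
    (hJ : (J : Matrix n n R)ᵀ = -J) (t : symmetricTensors R (n → R)) :
    (symmetricTensorsEquivSkewAdjoint R n J hJ t : Matrix n n R) =
      tensorEquivMatrix R n n t * J :=
  rfl

lemma tensorEquivMatrix_map_mul_of_symplectic {J X X' : Matrix n n R} (hX : Xᵀ * J * X = J)
    (hXX' : X * X' = 1) (t : (n → R) ⊗[R] (n → R)) :
    tensorEquivMatrix R n n (map X.mulVecLin X.mulVecLin t) * J =
      X * (tensorEquivMatrix R n n t * J) * X' := by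
  rw [tensorEquivMatrix_map, Matrix.mul_assoc, transpose_mul_eq_mul_of_mul_eq_one hX hXX',
    Matrix.mul_assoc, Matrix.mul_assoc, Matrix.mul_assoc]

end

lemma Jmat_eq_neg_J (g : ℕ) (R : Type*) [CommRing R] : Jmat g R = -Matrix.J (Fin g) R := by
  rw [Jmat, Matrix.J, fromBlocks_neg]
  simp

lemma transpose_Jmat (g : ℕ) (R : Type*) [CommRing R] : (Jmat g R)ᵀ = -Jmat g R := by
  rw [Jmat_eq_neg_J, transpose_neg, J_transpose]

lemma Jmat_mul_self (g : ℕ) (R : Type*) [CommRing R] : Jmat g R * Jmat g R = -1 := by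
  rw [Jmat_eq_neg_J, neg_mul_neg, J_squared]

-- Reducible, so that `transpose_Jmat` is accepted as a statement about its coercion.
abbrev Jmat.unit (g : ℕ) (R : Type*) [CommRing R] :
    (Matrix (Fin g ⊕ Fin g) (Fin g ⊕ Fin g) R)ˣ where
  val := Jmat g R
  inv := -Jmat g R
  val_inv := by rw [mul_neg, Jmat_mul_self, neg_neg]
  inv_val := by rw [neg_mul, Jmat_mul_self, neg_neg]

theorem stmt11_general (g : ℕ) (R : Type*) [CommRing R] :
    ∃ (sp : Submodule R (Matrix (Fin g ⊕ Fin g) (Fin g ⊕ Fin g) R))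
      (D2 : Submodule R (((Fin g ⊕ Fin g) → R) ⊗[R] ((Fin g ⊕ Fin g) → R))),
      (sp : Set (Matrix (Fin g ⊕ Fin g) (Fin g ⊕ Fin g) R)) =
        {Y | Jmat g R * Y + Yᵀ * Jmat g R = 0} ∧
      (D2 : Set (((Fin g ⊕ Fin g) → R) ⊗[R] ((Fin g ⊕ Fin g) → R))) =
        {t | TensorProduct.comm R ((Fin g ⊕ Fin g) → R) ((Fin g ⊕ Fin g) → R) t = t} ∧
      ∃ φ : D2 ≃ₗ[R] sp,
        (∀ (u : (Fin g ⊕ Fin g) → R) (h : u ⊗ₜ[R] u ∈ D2),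
          ((φ ⟨u ⊗ₜ[R] u, h⟩ : sp) : Matrix (Fin g ⊕ Fin g) (Fin g ⊕ Fin g) R) =
            Matrix.vecMulVec u (Matrix.vecMul u (Jmat g R))) ∧
        (∀ X X' : Matrix (Fin g ⊕ Fin g) (Fin g ⊕ Fin g) R,
          Xᵀ * Jmat g R * X = Jmat g R → X * X' = 1 → X' * X = 1 →
          ∀ t t' : D2,
            TensorProduct.map X.mulVecLin X.mulVecLin (t : _) = (t' : _) →
            ((φ t' : sp) : Matrix (Fin g ⊕ Fin g) (Fin g ⊕ Fin g) R) =
              X * ((φ t : sp) : Matrix (Fin g ⊕ Fin g) (Fin g ⊕ Fin g) R) * X') := by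
  refine ⟨skewAdjointMatricesSubmodule (Jmat g R), symmetricTensors R _, ?_, rfl,
    symmetricTensorsEquivSkewAdjoint R _ (Jmat.unit g R) (transpose_Jmat g R), ?_, ?_⟩
  · ext Y
    exact (mem_skewAdjointMatricesSubmodule _ _).trans
      (isSkewAdjoint_iff_mul_add_transpose_mul_eq_zero _ _)
  · intro u _
    rw [coe_symmetricTensorsEquivSkewAdjoint_apply, tensorEquivMatrix_tmul]
    exact vecMulVec_mul u u (Jmat g R)
  · intro X X' hX hXX' _ t t' hmap
    rw [coe_symmetricTensorsEquivSkewAdjoint_apply, coe_symmetricTensorsEquivSkewAdjoint_apply,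
      ← hmap]
    exact tensorEquivMatrix_map_mul_of_symplectic hX hXX' _

/-- The symplectic Lie algebra `sp(2g,R)`, with the conjugation action of `Sp(2g,R)`,
is isomorphic as an `Sp(2g,R)`-module to the divided square `D²(U_R)` (the submodule of
symmetric tensors in `U_R ⊗ U_R`, `U_R = R^{2g}`), where `u ⊗ u` corresponds to the
endomorphism `x ↦ ⟨u,x⟩ u` for the symplectic form `⟨x,y⟩ = xᵀ J y`. -/
theorem stmt11 (g : ℕ) (hg : 1 ≤ g) (R : Type*) [CommRing R] :
    ∃ (sp : Submodule R (Matrix (Fin g ⊕ Fin g) (Fin g ⊕ Fin g) R))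
      (D2 : Submodule R (((Fin g ⊕ Fin g) → R) ⊗[R] ((Fin g ⊕ Fin g) → R))),
      (sp : Set (Matrix (Fin g ⊕ Fin g) (Fin g ⊕ Fin g) R)) =
        {Y | Jmat g R * Y + Yᵀ * Jmat g R = 0} ∧
      (D2 : Set (((Fin g ⊕ Fin g) → R) ⊗[R] ((Fin g ⊕ Fin g) → R))) =
        {t | TensorProduct.comm R ((Fin g ⊕ Fin g) → R) ((Fin g ⊕ Fin g) → R) t = t} ∧
      ∃ φ : D2 ≃ₗ[R] sp,
        (∀ (u : (Fin g ⊕ Fin g) → R) (h : u ⊗ₜ[R] u ∈ D2),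
          ((φ ⟨u ⊗ₜ[R] u, h⟩ : sp) : Matrix (Fin g ⊕ Fin g) (Fin g ⊕ Fin g) R) =
            Matrix.vecMulVec u (Matrix.vecMul u (Jmat g R))) ∧
        (∀ X X' : Matrix (Fin g ⊕ Fin g) (Fin g ⊕ Fin g) R,
          Xᵀ * Jmat g R * X = Jmat g R → X * X' = 1 → X' * X = 1 →
          ∀ t t' : D2,
            TensorProduct.map X.mulVecLin X.mulVecLin (t : _) = (t' : _) →
            ((φ t' : sp) : Matrix (Fin g ⊕ Fin g) (Fin g ⊕ Fin g) R) =
              X * ((φ t : sp) : Matrix (Fin g ⊕ Fin g) (Fin g ⊕ Fin g) R) * X') :=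
  stmt11_general g R
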